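/- For the Euclidean case G = ℝⁿ with n ≥ 3 and any δ > 0, there exists C > 0 such that for every x ∈ ℝⁿ, ∫_{ℝⁿ} ‖x−y‖^{-(n−2)} · (1 + ‖y‖^{n+δ})^{-1} dy ≤ C / (1 + ‖x‖^{n−2}). -/

import Mathlib

/-!
The estimate holds for the kernel `‖z‖^{-a}` and the weight `(1 + ‖y‖^b)⁻¹` whenever
`0 ≤ a < d < b`, `d` the dimension. Put `r = (1 + ‖x‖) / 2`. Where `‖x - y‖ < r` we have
`1 + ‖y‖ > r`, so the weight is `O(r^{-b})`, while by scaling the kernel integrates over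
`B(x, r)` to `r^{d-a}` times its (finite, as `a < d`) integral over the unit ball.
Where `‖x - y‖ ≥ r` the kernel is at most `r^{-a}` and the weight is integrable as `b > d`.
As `r ≥ 1/2` and `b > d`, both contributions are `O(r^{-a}) = O((1 + ‖x‖^a)⁻¹)`.
-/

open MeasureTheory Metric Set Module
open scoped ENNReal

theorem one_add_rpow_le_two_rpow_mul {t b : ℝ} (ht : 0 ≤ t) (hb : 0 ≤ b) :
    (1 + t) ^ b ≤ 2 ^ b * (1 + t ^ b) := by
  calc (1 + t) ^ b ≤ (2 * max 1 t) ^ b := by gcongr; linarith [le_max_left 1 t, le_max_right 1 t]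
    _ = 2 ^ b * max 1 t ^ b := Real.mul_rpow zero_le_two (by positivity)
    _ ≤ 2 ^ b * (1 + t ^ b) := by
        gcongr
        rcases max_cases 1 t with ⟨h, -⟩ | ⟨h, -⟩ <;> rw [h]
        · linarith [Real.one_rpow b, Real.rpow_nonneg ht b]
        · linarith

theorem inv_one_add_rpow_le {t b : ℝ} (ht : 0 ≤ t) (hb : 0 ≤ b) :
    (1 + t ^ b)⁻¹ ≤ 2 ^ b * (1 + t) ^ (-b) := by
  rw [Real.rpow_neg (by positivity), ← div_eq_mul_inv, le_div_iff₀ (by positivity),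
    inv_mul_le_iff₀ (by positivity)]
  linarith [one_add_rpow_le_two_rpow_mul ht hb]

theorem rpow_neg_half_one_add_le {t a : ℝ} (ht : 0 ≤ t) (ha : 0 ≤ a) :
    ((1 + t) / 2) ^ (-a) ≤ 2 ^ (a + 1) / (1 + t ^ a) := by
  rw [Real.div_rpow (by positivity) zero_le_two, Real.rpow_neg (by positivity),
    Real.rpow_neg zero_le_two, div_inv_eq_mul, Real.rpow_add_one two_ne_zero,
    inv_mul_eq_div, div_le_div_iff₀ (by positivity) (by positivity)]
  have h1 : 1 ≤ (1 + t) ^ a := Real.one_le_rpow (by linarith) ha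
  have h2 : t ^ a ≤ (1 + t) ^ a := Real.rpow_le_rpow ht (by linarith) ha
  nlinarith [Real.rpow_pos_of_pos two_pos a]

theorem rpow_le_two_rpow_neg {r e : ℝ} (hr : 2⁻¹ ≤ r) (he : e ≤ 0) : r ^ e ≤ 2 ^ (-e) :=
  calc r ^ e ≤ 2⁻¹ ^ e := Real.rpow_le_rpow_of_nonpos (by norm_num) hr he
    _ = 2 ^ (-e) := by rw [Real.inv_rpow zero_le_two, Real.rpow_neg zero_le_two]

theorem rpow_neg_norm_sub_mul_le {E : Type*} [SeminormedAddCommGroup E] {a b r : ℝ}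
    (ha : 0 ≤ a) (hb : 0 ≤ b) (hr : 0 < r) {x : E} (hxr : 2 * r ≤ 1 + ‖x‖) (y : E) :
    ‖x - y‖ ^ (-a) * (1 + ‖y‖) ^ (-b)
      ≤ r ^ (-b) * (ball (0 : E) r).indicator (fun z ↦ ‖z‖ ^ (-a)) (x - y)
        + r ^ (-a) * (1 + ‖y‖) ^ (-b) := by
  by_cases hy : ‖x - y‖ < r
  · have hry : r ≤ 1 + ‖y‖ := by linarith [norm_sub_norm_le x y]
    refine le_add_of_le_of_nonneg ?_ (by positivity)
    rw [indicator_of_mem (mem_ball_zero_iff.2 hy), mul_comm]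
    exact mul_le_mul_of_nonneg_right (Real.rpow_le_rpow_of_nonpos hr hry (neg_nonpos.2 hb))
      (by positivity)
  · rw [indicator_of_notMem (by simpa using hy), mul_zero, zero_add]
    refine mul_le_mul_of_nonneg_right ?_ (by positivity)
    exact Real.rpow_le_rpow_of_nonpos hr (not_lt.1 hy) (neg_nonpos.2 ha)

section RieszPotential

variable {E : Type*} [NormedAddCommGroup E] [NormedSpace ℝ E] [FiniteDimensional ℝ E]
  [MeasurableSpace E] [BorelSpace E] (μ : Measure E) [μ.IsAddHaarMeasure]

theorem integrableOn_ball_rpow_neg_norm {a : ℝ} (ha : 0 ≤ a) (had : a < finrank ℝ E)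
    (r : ℝ) :
    IntegrableOn (fun z : E ↦ ‖z‖ ^ (-a)) (ball 0 r) μ := by
  have hd : 1 ≤ finrank ℝ E := by exact_mod_cast (show (0 : ℝ) < finrank ℝ E by linarith)
  refine integrableOn_ball_of_norm_le_rpow hd (C := 1) had (.of_forall fun z ↦ ?_)
    (by fun_prop : Measurable fun z : E ↦ ‖z‖ ^ (-a)).aestronglyMeasurable
  rw [one_mul, Real.norm_of_nonneg (by positivity)]

theorem setIntegral_ball_rpow_neg_norm (a : ℝ) {r : ℝ} (hr : 0 < r) :
    ∫ z in ball (0 : E) r, ‖z‖ ^ (-a) ∂μ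
      = r ^ ((finrank ℝ E : ℝ) - a) * ∫ z in ball (0 : E) 1, ‖z‖ ^ (-a) ∂μ := by
  have hscale :=
    Measure.setIntegral_comp_smul_of_pos μ (fun z : E ↦ ‖z‖ ^ (-a)) (ball 0 1) hr
  simp only [smul_unitBall_of_pos hr, norm_smul, Real.norm_of_nonneg hr.le,
    Real.mul_rpow hr.le (norm_nonneg _), integral_const_mul, smul_eq_mul] at hscale
  rw [Real.rpow_sub hr, Real.rpow_natCast, div_eq_mul_inv, ← Real.rpow_neg hr.le, mul_assoc,
    hscale, ← mul_assoc, mul_inv_cancel₀ (by positivity), one_mul]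

theorem lintegral_rpow_neg_norm_sub_mul_inv_le {a b r : ℝ} (ha : 0 ≤ a)
    (had : a < finrank ℝ E) (hdb : (finrank ℝ E : ℝ) < b) (hr : 0 < r) {x : E}
    (hxr : 2 * r ≤ 1 + ‖x‖) :
    ∫⁻ y, ENNReal.ofReal (‖x - y‖ ^ (-a) * (1 + ‖y‖ ^ b)⁻¹) ∂μ
      ≤ ENNReal.ofReal (2 ^ b *
          (r ^ (-b) * r ^ ((finrank ℝ E : ℝ) - a) * ∫ z in ball (0 : E) 1, ‖z‖ ^ (-a) ∂μ
            + r ^ (-a) * ∫ y, (1 + ‖y‖) ^ (-b) ∂μ)) := by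
  have hb : 0 ≤ b := by linarith
  set g : E → ℝ := fun y ↦
    r ^ (-b) * (ball (0 : E) r).indicator (fun z ↦ ‖z‖ ^ (-a)) (x - y)
      + r ^ (-a) * (1 + ‖y‖) ^ (-b)
  have hg_nonneg : ∀ y, 0 ≤ 2 ^ b * g y := fun y ↦ mul_nonneg (by positivity) <|
    add_nonneg (mul_nonneg (by positivity) (indicator_nonneg (fun z _ ↦ by positivity) _))
      (by positivity)
  have hkernel := ((integrableOn_ball_rpow_neg_norm μ ha had r).integrable_indicator
    measurableSet_ball).comp_sub_left x |>.const_mul (r ^ (-b))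
  have hweight := (integrable_one_add_norm (μ := μ) hdb).const_mul (r ^ (-a))
  have hpt : ∀ y, ‖x - y‖ ^ (-a) * (1 + ‖y‖ ^ b)⁻¹ ≤ 2 ^ b * g y := fun y ↦
    calc ‖x - y‖ ^ (-a) * (1 + ‖y‖ ^ b)⁻¹
        ≤ ‖x - y‖ ^ (-a) * (2 ^ b * (1 + ‖y‖) ^ (-b)) := by
          gcongr; exact inv_one_add_rpow_le (norm_nonneg y) hb
      _ = 2 ^ b * (‖x - y‖ ^ (-a) * (1 + ‖y‖) ^ (-b)) := by ring
      _ ≤ 2 ^ b * g y := by gcongr; exact rpow_neg_norm_sub_mul_le ha hb hr hxr y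
  calc ∫⁻ y, ENNReal.ofReal (‖x - y‖ ^ (-a) * (1 + ‖y‖ ^ b)⁻¹) ∂μ
      ≤ ∫⁻ y, ENNReal.ofReal (2 ^ b * g y) ∂μ :=
        lintegral_mono fun y ↦ ENNReal.ofReal_le_ofReal (hpt y)
    _ = ENNReal.ofReal (∫ y, 2 ^ b * g y ∂μ) :=
        (ofReal_integral_eq_lintegral_ofReal ((hkernel.add hweight).const_mul _)
          (.of_forall hg_nonneg)).symm
    _ = _ := by
        rw [integral_const_mul, integral_add hkernel hweight, integral_const_mul,
          integral_const_mul, integral_sub_left_eq_self _ μ x,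
          integral_indicator measurableSet_ball, setIntegral_ball_rpow_neg_norm μ a hr, mul_assoc]

theorem exists_lintegral_rpow_neg_norm_sub_mul_inv_le {a b : ℝ} (ha : 0 ≤ a)
    (had : a < finrank ℝ E) (hdb : (finrank ℝ E : ℝ) < b) :
    ∃ C : ℝ, 0 < C ∧ ∀ x : E,
      ∫⁻ y, ENNReal.ofReal (‖x - y‖ ^ (-a) * (1 + ‖y‖ ^ b)⁻¹) ∂μ
        ≤ ENNReal.ofReal (C / (1 + ‖x‖ ^ a)) := by
  set d : ℝ := (finrank ℝ E : ℝ)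
  set K₁ := ∫ z in ball (0 : E) 1, ‖z‖ ^ (-a) ∂μ
  set K₂ := ∫ y, (1 + ‖y‖) ^ (-b) ∂μ
  have hK₁ : 0 ≤ K₁ := setIntegral_nonneg measurableSet_ball fun z _ ↦ by positivity
  have hK₂ : 0 ≤ K₂ := integral_nonneg fun y ↦ by positivity
  refine ⟨2 ^ (a + b + 1) * (2 ^ (b - d) * K₁ + K₂) + 1, by positivity, fun x ↦ ?_⟩
  set r := (1 + ‖x‖) / 2
  have hr : 0 < r := by positivity
  have hxr : 2 * r ≤ 1 + ‖x‖ := by simp only [r]; linarith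
  refine (lintegral_rpow_neg_norm_sub_mul_inv_le μ ha had hdb hr hxr).trans
    (ENNReal.ofReal_le_ofReal ?_)
  calc 2 ^ b * (r ^ (-b) * r ^ (d - a) * K₁ + r ^ (-a) * K₂)
      = 2 ^ b * r ^ (-a) * (r ^ (d - b) * K₁ + K₂) := by
        rw [← Real.rpow_add hr, show -b + (d - a) = -a + (d - b) by ring, Real.rpow_add hr]; ring
    _ ≤ 2 ^ b * (2 ^ (a + 1) / (1 + ‖x‖ ^ a)) * (2 ^ (-(d - b)) * K₁ + K₂) := by
        gcongr
        · exact rpow_neg_half_one_add_le (norm_nonneg x) ha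
        · exact rpow_le_two_rpow_neg (by simp only [r]; linarith [norm_nonneg x]) (by linarith)
    _ = 2 ^ (a + b + 1) * (2 ^ (b - d) * K₁ + K₂) / (1 + ‖x‖ ^ a) := by
        rw [neg_sub, show a + b + 1 = b + (a + 1) by ring, Real.rpow_add two_pos b (a + 1)]; ring
    _ ≤ _ := by gcongr; linarith

end RieszPotential

/-- Euclidean case of the potential decay estimate (Zhang's Proposition 2.2):
for `n ≥ 3` and `δ > 0` there is `C > 0` with
`∫_{ℝⁿ} ‖x-y‖^{-(n-2)} (1 + ‖y‖^{n+δ})^{-1} dy ≤ C / (1 + ‖x‖^{n-2})`. -/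
theorem stmt7 (n : ℕ) (hn : 3 ≤ n) (δ : ℝ) (hδ : 0 < δ) :
    ∃ C : ℝ, 0 < C ∧ ∀ x : EuclideanSpace ℝ (Fin n),
      (∫⁻ y : EuclideanSpace ℝ (Fin n), ENNReal.ofReal
          (‖x - y‖ ^ (-((n : ℝ) - 2)) * (1 + ‖y‖ ^ ((n : ℝ) + δ))⁻¹))
        ≤ ENNReal.ofReal (C / (1 + ‖x‖ ^ ((n : ℝ) - 2))) := by
  have hd : (finrank ℝ (EuclideanSpace ℝ (Fin n)) : ℝ) = n := by simp
  have hn' : (3 : ℝ) ≤ n := by exact_mod_cast hn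
  exact exists_lintegral_rpow_neg_norm_sub_mul_inv_le volume (by linarith) (by rw [hd]; linarith)
    (by rw [hd]; linarith)
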